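/- Let Δ be a nonempty quasi-compact subspace of SStar_{f,hp}(R). Then the semistar operation ∧(Δ), defined by E^{∧(Δ)} = ⋂{E^⋆ : ⋆ ∈ Δ} for every nonzero R-submodule E of K, belongs to SStar_{f,hp}(R), i.e. it is a finite type homogeneous preserving semistar operation on R. -/

import Mathlib

open Pointwise

section Instances
variable {A : Type*} {K : Type*} [CommRing A] [Field K] [Algebra A K]
instance : SMulCommClass K A K := SMulCommClass.symm A K K
end Instances

/-- A semistar operation on an integral domain `A` with quotient field `K`: a map on the
nonzero `A`-submodules of `K` satisfying `(xE)^⋆ = xE^⋆`, monotonicity, `E ⊆ E^⋆` and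
idempotency.  (We normalize the irrelevant value at `⊥` by `⊥ ↦ ⊥`.) -/
structure Semistar (A K : Type*) [CommRing A] [Field K] [Algebra A K] where
  toFun : Submodule A K → Submodule A K
  map_bot' : toFun ⊥ = ⊥
  smul' : ∀ x : K, x ≠ 0 → ∀ E : Submodule A K, E ≠ ⊥ → toFun (x • E) = x • toFun E
  mono' : ∀ E F : Submodule A K, E ≠ ⊥ → E ≤ F → toFun E ≤ toFun F
  le' : ∀ E : Submodule A K, E ≠ ⊥ → E ≤ toFun E
  idem' : ∀ E : Submodule A K, E ≠ ⊥ → toFun (toFun E) = toFun E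

section
variable {Γ : Type*} [AddCommMonoid Γ] [LinearOrder Γ]
  [CovariantClass Γ Γ (· + ·) (· < ·)] [Nontrivial Γ]
variable {A : Type*} [CommRing A] [IsDomain A]
variable {K : Type*} [Field K] [Algebra A K] [IsFractionRing A K]
variable (𝒜 : Γ → AddSubgroup A) [GradedRing 𝒜]

/-- `a` is a nonzero homogeneous element of the graded domain `A`. -/
def IsHomog (a : A) : Prop := a ≠ 0 ∧ ∃ γ : Γ, a ∈ 𝒜 γ

/-- `x ∈ K` is a (nonzero) homogeneous element of the homogeneous quotient ring `R_H`. -/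
def IsHomogElem (x : K) : Prop :=
  ∃ a s : A, IsHomog 𝒜 a ∧ IsHomog 𝒜 s ∧ x * algebraMap A K s = algebraMap A K a

/-- `x ∈ K` belongs to the homogeneous quotient ring `R_H`. -/
def MemRH (x : K) : Prop :=
  ∃ a s : A, IsHomog 𝒜 s ∧ x * algebraMap A K s = algebraMap A K a

/-- The image in `K` of an integral ideal of `A`. -/
def idealToK (I : Ideal A) : Submodule A K := Submodule.map (Algebra.linearMap A K) I

/-- `E` is a homogeneous fractional ideal of `A`. -/
def IsHomogFrac (E : Submodule A K) : Prop :=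
  ∃ s : A, IsHomog 𝒜 s ∧ ∃ I : Ideal A, Ideal.IsHomogeneous 𝒜 I ∧
    algebraMap A K s • E = idealToK (K := K) I

/-- `star` is homogeneous preserving. -/
def HomogPres (star : Submodule A K → Submodule A K) : Prop :=
  ∀ E : Submodule A K, E ≠ ⊥ → IsHomogFrac 𝒜 E → IsHomogFrac 𝒜 (star E)

/-- Membership in `E^{⋆_f} = ⋃ {F^⋆ : F nonzero finitely generated, F ⊆ E}`. -/
def MemStarF (star : Submodule A K → Submodule A K) (E : Submodule A K) (x : K) : Prop :=
  ∃ F : Submodule A K, F ≠ ⊥ ∧ F.FG ∧ F ≤ E ∧ x ∈ star F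

/-- `star` is of finite type, i.e. `⋆ = ⋆_f`. -/
def IsFiniteType (star : Submodule A K → Submodule A K) : Prop :=
  ∀ E : Submodule A K, E ≠ ⊥ → ∀ x : K, x ∈ star E ↔ MemStarF star E x

/-- The `A`-submodule `ES` of `K` generated by all products `e * v`, `e ∈ E`, `v ∈ S`. -/
def mulSet (E : Submodule A K) (S : Set K) : Submodule A K :=
  Submodule.span A {z : K | ∃ e ∈ E, ∃ v ∈ S, z = e * v}

/-- `V` is a homogeneous overring of `A`: `R ⊆ V ⊆ R_H` and `V` is generated as an
additive group by its homogeneous elements. -/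
def IsHomogOverring (V : Subring K) : Prop :=
  (∀ a : A, algebraMap A K a ∈ V) ∧ (∀ x ∈ V, MemRH 𝒜 x) ∧
  (∀ v ∈ V, v ∈ AddSubgroup.closure {x : K | x ∈ V ∧ IsHomogElem 𝒜 x})

/-- The order on semistar operations: `σ ≤ τ` iff `E^σ ⊆ E^τ` for every nonzero `E`. -/
def sle (σ τ : Semistar A K) : Prop :=
  ∀ E : Submodule A K, E ≠ ⊥ → σ.toFun E ≤ τ.toFun E

end

section Spaces
variable {Γ : Type*} [AddCommMonoid Γ] [LinearOrder Γ]
  [CovariantClass Γ Γ (· + ·) (· < ·)] [Nontrivial Γ]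
  {A : Type*} [CommRing A] [IsDomain A]
  (K : Type*) [Field K] [Algebra A K] [IsFractionRing A K]
  (𝒜 : Γ → AddSubgroup A) [GradedRing 𝒜]

/-- `SStar_{f,hp}(R)`: the set of finite type homogeneous preserving semistar
operations on `R`. -/
abbrev SStarFHP := {s : Semistar A K // IsFiniteType s.toFun ∧ HomogPres 𝒜 s.toFun}

/-- The Zariski topology on `SStar_{f,hp}(R)`, with subbasic open sets
`V_E = {⋆ : 1 ∈ E^⋆}` for `E` a nonzero `A`-submodule of `K`. -/
instance : TopologicalSpace (SStarFHP K 𝒜) :=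
  TopologicalSpace.generateFrom
    {S : Set (SStarFHP K 𝒜) | ∃ E : Submodule A K, E ≠ ⊥ ∧ S = {s | (1 : K) ∈ s.1.toFun E}}

/-- `SStar_{hp}(R)`: the set of homogeneous preserving semistar operations on `R`. -/
abbrev SStarHP := {s : Semistar A K // HomogPres 𝒜 s.toFun}

/-- The Zariski topology on `SStar_{hp}(R)`. -/
instance : TopologicalSpace (SStarHP K 𝒜) :=
  TopologicalSpace.generateFrom
    {S : Set (SStarHP K 𝒜) | ∃ E : Submodule A K, E ≠ ⊥ ∧ S = {s | (1 : K) ∈ s.1.toFun E}}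

/-- `Over_h(R)`: the set of homogeneous overrings of `R`. -/
abbrev OverH := {T : Subring K // IsHomogOverring 𝒜 T}

/-- The Zariski topology on `Over_h(R)`, with basic open sets `B_F = {T : F ⊆ T}` for `F`
a finite subset of `K`. -/
instance : TopologicalSpace (OverH K 𝒜) :=
  TopologicalSpace.generateFrom
    {S : Set (OverH K 𝒜) | ∃ F : Set K, F.Finite ∧ S = {T | F ⊆ (T.1 : Set K)}}

end Spaces

/-!
Finite type: if `x ∈ E^⋆` for every `⋆ ∈ Δ`, the sets `{⋆ : x ∈ F^⋆} = V_{x⁻¹F}`, with `F ⊆ E`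
nonzero and finitely generated, are open, cover `Δ` (each `⋆` is of finite type) and are directed
under `F ↦ F ⊔ G`; by compactness a single `F` works for all of `Δ`.

Homogeneity: if `d • E^{⋆₀}` is integral, then `d • ⋂ E^⋆` is the image of the ideal
`⋂ {a : a / d ∈ E^⋆}`. Writing `t • E^⋆ = I_⋆`, each of these ideals is `{a : t a ∈ d I_⋆}`,
the colon of a homogeneous ideal by a homogeneous element, which is homogeneous because `Γ` is
cancellative.
-/

theorem Ideal.IsHomogeneous.comap_mulLeft {ι A : Type*} [AddMonoid ι] [IsLeftCancelAdd ι]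
    [DecidableEq ι] [CommRing A] {𝒜 : ι → AddSubgroup A} [GradedRing 𝒜] {I : Ideal A}
    (hI : I.IsHomogeneous 𝒜) {t : A} {i : ι} (ht : t ∈ 𝒜 i) :
    (Submodule.comap (LinearMap.mulLeft A t) I).IsHomogeneous 𝒜 := by
  let : AddLeftCancelMonoid ι := { ‹AddMonoid ι›, ‹IsLeftCancelAdd ι› with }
  intro j a (ha : t * a ∈ I)
  show t * _ ∈ I
  rw [← DirectSum.coe_decompose_mul_add_of_left_mem 𝒜 ht]
  exact hI (i + j) ha

section Pointwise

variable {A K : Type*} [CommRing A] [Field K] [Algebra A K]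

theorem Submodule.smul_ne_bot {x : K} (hx : x ≠ 0) {N : Submodule A K} (hN : N ≠ ⊥) :
    x • N ≠ ⊥ := by
  contrapose! hN
  rw [← inv_smul_smul₀ hx N, hN, Submodule.smul_bot']

theorem Submodule.smul_iInf {ι : Sort*} {x : K} (hx : x ≠ 0) (N : ι → Submodule A K) :
    x • ⨅ i, N i = ⨅ i, x • N i := by
  ext y
  simp only [Submodule.mem_iInf, Submodule.mem_smul_iff_inv_mul_mem hx]

end Pointwise

namespace Semistar

variable {A K : Type*} [CommRing A] [Field K] [Algebra A K]

theorem mem_toFun_smul_iff (s : Semistar A K) {x : K} (hx : x ≠ 0) {E : Submodule A K}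
    (hE : E ≠ ⊥) {y : K} : y ∈ s.toFun (x • E) ↔ x⁻¹ * y ∈ s.toFun E := by
  rw [s.smul' x hx E hE, Submodule.mem_smul_iff_inv_mul_mem hx]

/-- The paper's `∧(Δ)`, for `Δ` the range of `f`. -/
def iInf {ι : Type*} [Nonempty ι] (f : ι → Semistar A K) : Semistar A K where
  toFun E := ⨅ i, (f i).toFun E
  map_bot' := by
    obtain ⟨i⟩ := ‹Nonempty ι›
    exact eq_bot_iff.2 ((iInf_le _ i).trans (f i).map_bot'.le)
  smul' x hx E hE := by
    rw [Submodule.smul_iInf hx]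
    exact iInf_congr fun i => (f i).smul' x hx E hE
  mono' E F hE hEF := iInf_mono fun i => (f i).mono' E F hE hEF
  le' E hE := le_iInf fun i => (f i).le' E hE
  idem' E hE := by
    have hle : E ≤ ⨅ i, (f i).toFun E := le_iInf fun i => (f i).le' E hE
    have hne : ⨅ i, (f i).toFun E ≠ ⊥ := ne_bot_of_le_ne_bot hE hle
    refine le_antisymm (iInf_mono fun i => ?_) (le_iInf fun i => (f i).le' _ hne)
    exact ((f i).mono' _ _ hne (iInf_le _ i)).trans ((f i).idem' E hE).le

end Semistar

section Zariski

variable {Γ : Type*} [AddCommMonoid Γ] [LinearOrder Γ] {A : Type*} [CommRing A]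
  {K : Type*} [Field K] [Algebra A K] {𝒜 : Γ → AddSubgroup A} [GradedRing 𝒜]

theorem SStarFHP.isOpen_setOf_mem {F : Submodule A K} (hF : F ≠ ⊥) (x : K) :
    IsOpen {s : SStarFHP K 𝒜 | x ∈ s.1.toFun F} := by
  rcases eq_or_ne x 0 with rfl | hx
  · simp
  have hset : {s : SStarFHP K 𝒜 | x ∈ s.1.toFun F} = {s | (1 : K) ∈ s.1.toFun (x⁻¹ • F)} := by
    ext s
    rw [Set.mem_ofPred_eq, Set.mem_ofPred_eq, s.1.mem_toFun_smul_iff (inv_ne_zero hx) hF, inv_inv,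
      mul_one]
  rw [hset]
  exact TopologicalSpace.isOpen_generateFrom_of_mem
    ⟨_, Submodule.smul_ne_bot (inv_ne_zero hx) hF, rfl⟩

theorem isFiniteType_iInf_of_isCompact {ι : Type*} (f : ι → SStarFHP K 𝒜)
    (hf : IsCompact (Set.range f)) : IsFiniteType fun E => ⨅ i, (f i).1.toFun E := by
  intro E hE x
  refine ⟨fun hx => ?_, fun ⟨F, hF, _, hFE, hxF⟩ =>
    iInf_mono (fun i => (f i).1.mono' F E hF hFE) hxF⟩
  let FGBelow := {F : Submodule A K // F ≠ ⊥ ∧ F.FG ∧ F ≤ E}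
  have : Nonempty FGBelow := by
    obtain ⟨e, heE, he⟩ := Submodule.exists_mem_ne_zero_of_ne_bot hE
    exact ⟨⟨_, by simpa using he, Submodule.fg_span_singleton e,
      Submodule.span_singleton_le_iff_mem _ _ |>.2 heE⟩⟩
  have hcover : Set.range f ⊆ ⋃ F : FGBelow, {s | x ∈ s.1.toFun F.1} := by
    rintro _ ⟨i, rfl⟩
    obtain ⟨F, hF, hFG, hFE, hxF⟩ := ((f i).2.1 E hE x).1 (Submodule.mem_iInf _ |>.1 hx i)
    exact Set.mem_iUnion.2 ⟨⟨F, hF, hFG, hFE⟩, hxF⟩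
  have hdir : Directed (· ⊆ ·) fun F : FGBelow => {s : SStarFHP K 𝒜 | x ∈ s.1.toFun F.1} := by
    rintro ⟨F, hF, hFG, hFE⟩ ⟨G, hG, hGG, hGE⟩
    refine ⟨⟨F ⊔ G, ne_bot_of_le_ne_bot hF le_sup_left, hFG.sup hGG, sup_le hFE hGE⟩, ?_, ?_⟩
    · exact fun s (hs : x ∈ s.1.toFun F) => s.1.mono' _ _ hF le_sup_left hs
    · exact fun s (hs : x ∈ s.1.toFun G) => s.1.mono' _ _ hG le_sup_right hs
  obtain ⟨⟨F, hF, hFG, hFE⟩, hxF⟩ :=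
    hf.elim_directed_cover _ (fun F => SStarFHP.isOpen_setOf_mem F.2.1 x) hcover hdir
  exact ⟨F, hF, hFG, hFE, Submodule.mem_iInf _ |>.2 fun i => hxF ⟨i, rfl⟩⟩

end Zariski

section Graded

variable {A : Type*} [CommRing A] {K : Type*} [Field K] [Algebra A K] [IsFractionRing A K]
  {Γ : Type*} {𝒜 : Γ → AddSubgroup A}

theorem IsHomog.algebraMap_ne_zero {d : A} (hd : IsHomog 𝒜 d) : algebraMap A K d ≠ 0 :=
  (map_ne_zero_iff _ (IsFractionRing.injective A K)).2 hd.1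

variable [AddCommMonoid Γ] [LinearOrder Γ] [IsLeftCancelAdd Γ] [GradedRing 𝒜]

theorem IsHomogFrac.isHomogeneous_comap_smul {M : Submodule A K} (hM : IsHomogFrac 𝒜 M) {d : A}
    (hd : IsHomog 𝒜 d) :
    ((algebraMap A K d • M).comap (Algebra.linearMap A K)).IsHomogeneous 𝒜 := by
  obtain ⟨t, ht, I, hI, htM⟩ := hM
  obtain ⟨δ, htδ⟩ := ht.2
  have hdK := hd.algebraMap_ne_zero (K := K)
  have htK := ht.algebraMap_ne_zero (K := K)
  have hcolon : (algebraMap A K d • M).comap (Algebra.linearMap A K) =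
      Submodule.comap (LinearMap.mulLeft A t) (Ideal.span {d} * I) := by
    ext a
    rw [Submodule.mem_comap, Submodule.mem_comap, Algebra.linearMap_apply,
      Submodule.mem_smul_iff_inv_mul_mem hdK, ← inv_mul_cancel_left₀ htK (_ * _),
      ← Submodule.mem_smul_iff_inv_mul_mem htK, htM, idealToK, Submodule.mem_map,
      LinearMap.mulLeft_apply, Ideal.mem_span_singleton_mul]
    refine exists_congr fun b => and_congr_right fun _ => ?_
    rw [Algebra.linearMap_apply, ← (IsFractionRing.injective A K).eq_iff, map_mul, map_mul]
    field_simp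
  have hdI : (Ideal.span {d} * I).IsHomogeneous 𝒜 :=
    (Ideal.homogeneous_span 𝒜 _ fun x hx => by rw [Set.mem_singleton_iff.1 hx]; exact hd.2).mul hI
  rw [hcolon]
  exact hdI.comap_mulLeft htδ

theorem IsHomogFrac.iInf {ι : Sort*} [Nonempty ι] {M : ι → Submodule A K}
    (hM : ∀ i, IsHomogFrac 𝒜 (M i)) : IsHomogFrac 𝒜 (⨅ i, M i) := by
  obtain ⟨i₀⟩ := ‹Nonempty ι›
  obtain ⟨d, hd, I₀, -, hdI₀⟩ := hM i₀
  refine ⟨d, hd, ⨅ i, (algebraMap A K d • M i).comap (Algebra.linearMap A K),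
    Ideal.IsHomogeneous.iInf fun i => (hM i).isHomogeneous_comap_smul hd, ?_⟩
  rw [Submodule.smul_iInf hd.algebraMap_ne_zero, idealToK, ← Submodule.comap_iInf,
    Submodule.map_comap_eq]
  refine (inf_eq_right.2 ?_).symm
  calc ⨅ i, algebraMap A K d • M i ≤ algebraMap A K d • M i₀ := iInf_le _ i₀
    _ = idealToK I₀ := hdI₀
    _ ≤ _ := LinearMap.map_le_range

theorem HomogPres.iInf {ι : Sort*} [Nonempty ι] {φ : ι → Submodule A K → Submodule A K}
    (hφ : ∀ i, HomogPres 𝒜 (φ i)) : HomogPres 𝒜 fun E => ⨅ i, φ i E :=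
  fun E hE hEh => IsHomogFrac.iInf fun i => hφ i E hE hEh

end Graded

theorem wedge_of_compact_mem_sstarFHP_general
    {Γ : Type*} [AddCommMonoid Γ] [LinearOrder Γ]
    [CovariantClass Γ Γ (· + ·) (· < ·)]
    {A : Type*} [CommRing A]
    (K : Type*) [Field K] [Algebra A K] [IsFractionRing A K]
    (𝒜 : Γ → AddSubgroup A) [GradedRing 𝒜]
    (Δ : Set (SStarFHP K 𝒜)) (hne : Δ.Nonempty) (hc : IsCompact Δ) :
    ∃ t : SStarFHP K 𝒜, ∀ E : Submodule A K, t.1.toFun E = ⨅ s ∈ Δ, s.1.toFun E := by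
  have := hne.to_subtype
  have := AddLeftStrictMono.toIsLeftCancelAdd (α := Γ)
  refine ⟨⟨Semistar.iInf fun s : Δ => s.1.1, ?_, HomogPres.iInf fun s => s.1.2.2⟩,
    fun E => iInf_subtype'' Δ fun s => s.1.toFun E⟩
  exact isFiniteType_iInf_of_isCompact (Subtype.val : Δ → SStarFHP K 𝒜)
    (by rwa [Subtype.range_coe])

/-- If `Δ` is a nonempty quasi-compact subspace of `SStar_{f,hp}(R)`,
then `∧(Δ)`, defined by `E^{∧(Δ)} = ⋂ {E^⋆ : ⋆ ∈ Δ}`, is a finite type homogeneous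
preserving semistar operation on `R`, i.e. belongs to `SStar_{f,hp}(R)`. -/
theorem wedge_of_compact_mem_sstarFHP
    {Γ : Type*} [AddCommMonoid Γ] [LinearOrder Γ]
    [CovariantClass Γ Γ (· + ·) (· < ·)] [Nontrivial Γ]
    {A : Type*} [CommRing A] [IsDomain A]
    (K : Type*) [Field K] [Algebra A K] [IsFractionRing A K]
    (𝒜 : Γ → AddSubgroup A) [GradedRing 𝒜]
    (Δ : Set (SStarFHP K 𝒜)) (hne : Δ.Nonempty) (hc : IsCompact Δ) :
    ∃ t : SStarFHP K 𝒜, ∀ E : Submodule A K, t.1.toFun E = ⨅ s ∈ Δ, s.1.toFun E :=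
  wedge_of_compact_mem_sstarFHP_general K 𝒜 Δ hne hc
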